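/- arXiv:1711.00571 — 2 statements merged into one kernel-verified Lean document; each statement's English description precedes it below -/
import Mathlib

section
/- Let L be a symmetric PSD matrix and N a symmetric PSD matrix with (1/2) N⁺ ⪯ L ⪯ 2 N⁺ and Range(N) = Range(L). Then (1/2) N^{1/2} Σ_{k=0}^{∞} (I - (1/2) N^{1/2} L N^{1/2})^k N^{1/2} x = L⁺ x for every x (where the series is interpreted on Range(L), on which it converges). -/
/-!
Let `P = N N⁺`, the orthogonal projection onto `Range N = Range L`. Since `R² = N`, also
`P R = R` and `R N⁺ R = P`, so conjugating the hypotheses by `R` gives `P/4 ⪯ T ⪯ P` for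
`T = ½ R L R`. Hence `S = P - T` satisfies `|⟨z, S z⟩| ≤ ¾ ‖z‖²` and has operator norm at most
`3/4`. Because `P R = R`, `(1 - T)^k R = S^k R`, so the series is `R (∑ₖ S^k) (½ R)`, a convergent
Neumann series. Finally `(1 - S) (N⁺ R L⁺) = ½ R` and `R N⁺ R L⁺ = P L⁺ = L⁺` identify its sum.
-/

open Matrix

/-- `Ap` is the Moore–Penrose pseudoinverse of `A` (the four Penrose conditions). -/
def IsMoorePenroseInv {n : ℕ} (A Ap : Matrix (Fin n) (Fin n) ℝ) : Prop :=
  A * Ap * A = A ∧ Ap * A * Ap = Ap ∧ (A * Ap)ᵀ = A * Ap ∧ (Ap * A)ᵀ = Ap * A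

/-- Loewner order on real symmetric matrices: domination of quadratic forms. -/
def LoewnerLE {n : ℕ} (M N : Matrix (Fin n) (Fin n) ℝ) : Prop :=
  ∀ z : Fin n → ℝ, z ⬝ᵥ M.mulVec z ≤ z ⬝ᵥ N.mulVec z

open scoped Matrix.Norms.L2Operator

theorem one_sub_pow_mul_eq_sub_pow_mul {α : Type*} [Ring α] {p t : α} (hp : IsIdempotentElem p)
    (hpt : p * t = t) (k : ℕ) {m : α} (hm : p * m = m) : (1 - t) ^ k * m = (p - t) ^ k * m := by
  induction k generalizing m with
  | zero => simp only [pow_zero]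
  | succ k ih =>
    have hstep : (1 - t) * m = (p - t) * m := by rw [sub_mul, sub_mul, one_mul, hm]
    have hrange : p * ((p - t) * m) = (p - t) * m := by rw [← mul_assoc, mul_sub, hp.eq, hpt]
    rw [pow_succ, pow_succ, mul_assoc, mul_assoc, hstep, ih hrange]

theorem hasSum_mul_pow_mul {A : Type*} [NormedRing A] [CompleteSpace A] {s b c : A} (a : A)
    (hs : ‖s‖ < 1) (hc : (1 - s) * c = b) : HasSum (fun k : ℕ => a * s ^ k * b) (a * c) := by
  have hsum : a * (∑' k : ℕ, s ^ k) * b = a * c := by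
    rw [← hc, mul_assoc a, ← mul_assoc _ (1 - s), geom_series_mul_neg s hs, one_mul]
  exact hsum ▸ ((summable_geometric_of_norm_lt_one hs).hasSum.mul_left a).mul_right b

theorem hasSum_mul_one_sub_pow_mul {A : Type*} [NormedRing A] [CompleteSpace A] {p t b c : A}
    (a : A) (hp : IsIdempotentElem p) (hpt : p * t = t) (hpb : p * b = b) (hs : ‖p - t‖ < 1)
    (hc : (1 - (p - t)) * c = b) : HasSum (fun k : ℕ => a * (1 - t) ^ k * b) (a * c) := by
  have hterm (k : ℕ) : a * (1 - t) ^ k * b = a * (p - t) ^ k * b := by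
    rw [mul_assoc, one_sub_pow_mul_eq_sub_pow_mul hp hpt k hpb, ← mul_assoc]
  simpa only [hterm] using hasSum_mul_pow_mul a hs hc

theorem HasSum.matrix_mulVec {X m n R : Type*} [Fintype n] [Semiring R] [TopologicalSpace R]
    [IsTopologicalSemiring R] {f : X → Matrix m n R} {a : Matrix m n R}
    (hf : HasSum f a) (x : n → R) : HasSum (fun k => f k *ᵥ x) (a *ᵥ x) :=
  hf.map (mulVec.addMonoidHomLeft x) (continuous_id.matrix_mulVec continuous_const)

namespace Matrix

variable {ι : Type*} [Fintype ι]

theorem dotProduct_transpose_mul_mul_mulVec (R M : Matrix ι ι ℝ) (z : ι → ℝ) :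
    z ⬝ᵥ (Rᵀ * M * R) *ᵥ z = (R *ᵥ z) ⬝ᵥ M *ᵥ (R *ᵥ z) := by
  rw [← mulVec_mulVec, ← mulVec_mulVec, dotProduct_mulVec, vecMul_transpose]

theorem IsSymm.dotProduct_mulVec_le_of_isIdempotentElem {P : Matrix ι ι ℝ} (hP : P.IsSymm)
    (hPP : IsIdempotentElem P) (z : ι → ℝ) : z ⬝ᵥ P *ᵥ z ≤ z ⬝ᵥ z := by
  classical
  have hsq : z ⬝ᵥ P *ᵥ z = (P *ᵥ z) ⬝ᵥ (P *ᵥ z) := by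
    simpa only [mul_one, hP.eq, hPP.eq, one_mulVec] using dotProduct_transpose_mul_mul_mulVec P 1 z
  have hnonneg : 0 ≤ (z - P *ᵥ z) ⬝ᵥ (z - P *ᵥ z) :=
    Finset.sum_nonneg fun i _ => mul_self_nonneg _
  rw [sub_dotProduct, dotProduct_sub, dotProduct_sub, dotProduct_comm (P *ᵥ z) z] at hnonneg
  linarith

theorem IsSymm.mul_eq_self_of_mul_mul_transpose {P R : Matrix ι ι ℝ} (hP : P.IsSymm)
    (h : P * (R * Rᵀ) = R * Rᵀ) : P * R = R := by
  have h' : R * Rᵀ * P = R * Rᵀ := by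
    simpa only [transpose_mul, transpose_transpose, hP.eq, mul_assoc] using congrArg Matrix.transpose h
  have hzero : (P * R - R) * (P * R - R)ᴴ = 0 := by
    rw [conjTranspose_eq_transpose_of_trivial, transpose_sub, transpose_mul, hP.eq]
    calc (P * R - R) * (Rᵀ * P - Rᵀ)
        = P * (R * Rᵀ) * P - P * (R * Rᵀ) - (R * Rᵀ * P - R * Rᵀ) := by noncomm_ring
      _ = 0 := by rw [h, h', sub_self]
  exact sub_eq_zero.1 (self_mul_conjTranspose_eq_zero.1 hzero)

theorem l2_opNorm_le_of_abs_dotProduct_mulVec_le [DecidableEq ι] {S : Matrix ι ι ℝ}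
    (hS : S.IsSymm) {c : ℝ} (hc : 0 ≤ c) (h : ∀ z, |z ⬝ᵥ S *ᵥ z| ≤ c * (z ⬝ᵥ z)) : ‖S‖ ≤ c := by
  have hsymm : (toEuclideanCLM (𝕜 := ℝ) S : EuclideanSpace ℝ ι →ₗ[ℝ] _).IsSymmetric :=
    isSymmetric_toEuclideanLin_iff.2 (isHermitian_iff_isSymm.2 hS)
  rw [cstar_norm_def, ContinuousLinearMap.norm_eq_iSup_rayleighQuotient _ hsymm]
  refine ciSup_le fun x => ?_
  have hxx : 0 ≤ x.ofLp ⬝ᵥ x.ofLp := Finset.sum_nonneg fun i _ => mul_self_nonneg _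
  have hx : ‖x‖ ^ 2 = x.ofLp ⬝ᵥ x.ofLp := by
    rw [EuclideanSpace.real_norm_sq_eq]; simp only [dotProduct, sq]
  have hSx : inner ℝ (toEuclideanCLM (𝕜 := ℝ) S x) x = x.ofLp ⬝ᵥ S *ᵥ x.ofLp := by
    rw [EuclideanSpace.inner_eq_star_dotProduct, ofLp_toEuclideanCLM, star_trivial, dotProduct_comm]
  rw [ContinuousLinearMap.rayleighQuotient, ContinuousLinearMap.reApplyInnerSelf_apply,
    RCLike.re_to_real, hSx, hx, abs_div, abs_of_nonneg hxx]
  exact div_le_of_le_mul₀ hxx hc (h _)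

end Matrix

namespace IsMoorePenroseInv

variable {n : ℕ} {A Ap : Matrix (Fin n) (Fin n) ℝ}

theorem mul_mul_eq_of_range_subset (h : IsMoorePenroseInv A Ap) {m : Type*} [Fintype m]
    {B : Matrix (Fin n) m ℝ} (hB : Set.range B.mulVec ⊆ Set.range A.mulVec) :
    A * Ap * B = B := by
  refine ext_iff_mulVec.2 fun v => ?_
  obtain ⟨w, hw⟩ := hB ⟨v, rfl⟩
  rw [← mulVec_mulVec, ← hw, mulVec_mulVec, h.1]

theorem commute (h : IsMoorePenroseInv A Ap) (hA : A.IsSymm) : Commute A Ap := by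
  obtain ⟨h1, -, h3, h4⟩ := h
  have hE : A * Ap = Apᵀ * A := by rw [← h3, transpose_mul, hA.eq]
  have hF : Ap * A = A * Apᵀ := by rw [← h4, transpose_mul, hA.eq]
  -- by `hE` and `hF`, both `A * Ap` and `Ap * A` equal `(A * Ap) * (Ap * A)`
  calc A * Ap = Apᵀ * A * (Ap * A) := by rw [mul_assoc, ← mul_assoc A, h1, hE]
    _ = A * Ap * (Ap * A) := by rw [← hE]
    _ = A * Ap * (A * Apᵀ) := by rw [hF]
    _ = Ap * A := by rw [← mul_assoc, h1, hF]

theorem mul_eq_mul_of_range_eq {B Bp : Matrix (Fin n) (Fin n) ℝ} (hA : IsMoorePenroseInv A Ap)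
    (hB : IsMoorePenroseInv B Bp) (hAB : Set.range A.mulVec = Set.range B.mulVec) :
    A * Ap = B * Bp := by
  have hBA : B * Bp * (A * Ap) = A * Ap := by
    rw [← mul_assoc, hB.mul_mul_eq_of_range_subset hAB.le]
  calc A * Ap = (B * Bp * (A * Ap))ᵀ := by rw [hBA, hA.2.2.1]
    _ = A * Ap * (B * Bp) := by rw [transpose_mul, hA.2.2.1, hB.2.2.1]
    _ = B * Bp := by rw [← mul_assoc, hA.mul_mul_eq_of_range_subset hAB.ge]

theorem mul_mul_eq_of_mul_transpose_eq (h : IsMoorePenroseInv A Ap)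
    {R : Matrix (Fin n) (Fin n) ℝ} (hR : R * Rᵀ = A) : A * Ap * R = R :=
  IsSymm.mul_eq_self_of_mul_mul_transpose h.2.2.1 (by rw [hR, h.1])

theorem sqrt_mul_mul_sqrt (h : IsMoorePenroseInv A Ap) (hA : A.IsSymm)
    {R : Matrix (Fin n) (Fin n) ℝ} (hR : R.IsSymm) (hRA : R * R = A) :
    R * Ap * R = A * Ap := by
  have hPR : A * Ap * R = R := h.mul_mul_eq_of_mul_transpose_eq (by rw [hR.eq, hRA])
  have hAX : A * (R * Ap * R) = A :=
    calc A * (R * Ap * R) = R * (A * Ap * R) := by rw [← hRA]; simp only [mul_assoc]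
      _ = A := by rw [hPR, hRA]
  calc R * Ap * R = Ap * (A * (R * Ap * R)) := by
        rw [← mul_assoc Ap A, ← (h.commute hA).eq, ← mul_assoc, ← mul_assoc, hPR]
    _ = A * Ap := by rw [hAX, (h.commute hA).eq]

end IsMoorePenroseInv

theorem LoewnerLE.transpose_mul_mul {n : ℕ} {M K : Matrix (Fin n) (Fin n) ℝ}
    (h : LoewnerLE M K) (R : Matrix (Fin n) (Fin n) ℝ) : LoewnerLE (Rᵀ * M * R) (Rᵀ * K * R) :=
  fun z => by simpa only [dotProduct_transpose_mul_mul_mulVec] using h (R *ᵥ z)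

theorem l2_opNorm_sub_half_smul_le {n : ℕ} {P K : Matrix (Fin n) (Fin n) ℝ}
    (hP : P.IsSymm) (hPP : IsIdempotentElem P) (hK : K.IsSymm)
    (hlow : LoewnerLE ((1 / 2 : ℝ) • P) K) (hhigh : LoewnerLE K ((2 : ℝ) • P)) :
    ‖P - (1 / 2 : ℝ) • K‖ ≤ 3 / 4 := by
  refine l2_opNorm_le_of_abs_dotProduct_mulVec_le (hP.sub (hK.smul _)) (by norm_num) fun z => ?_
  have hlow := hlow z
  have hhigh := hhigh z
  have hproj := hP.dotProduct_mulVec_le_of_isIdempotentElem hPP z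
  simp only [smul_mulVec, dotProduct_smul, smul_eq_mul, sub_mulVec, dotProduct_sub] at hlow hhigh ⊢
  rw [abs_le]
  constructor <;> linarith

theorem stmt_16 {n : ℕ} (L N Np Lp R : Matrix (Fin n) (Fin n) ℝ)
    (hL : L.PosSemidef) (hN : N.PosSemidef)
    (hNp : IsMoorePenroseInv N Np) (hLp : IsMoorePenroseInv L Lp)
    (hlow : LoewnerLE ((1 / 2 : ℝ) • Np) L) (hhigh : LoewnerLE L ((2 : ℝ) • Np))
    (hrange : Set.range N.mulVec = Set.range L.mulVec)
    (hR : R.PosSemidef) (hRsq : R * R = N)   -- R = N^{1/2}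
    (x : Fin n → ℝ) :
    Summable (fun k : ℕ =>
      (1 / 2 : ℝ) • R.mulVec
        (((1 - (1 / 2 : ℝ) • (R * L * R)) ^ k).mulVec (R.mulVec x))) ∧
    (∑' k : ℕ,
      (1 / 2 : ℝ) • R.mulVec
        (((1 - (1 / 2 : ℝ) • (R * L * R)) ^ k).mulVec (R.mulVec x)))
      = Lp.mulVec x := by
  have hLs : L.IsSymm := isHermitian_iff_isSymm.1 hL.isHermitian
  have hNs : N.IsSymm := isHermitian_iff_isSymm.1 hN.isHermitian
  have hRs : R.IsSymm := isHermitian_iff_isSymm.1 hR.isHermitian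
  set P := N * Np with hPdef
  have hPs : P.IsSymm := hNp.2.2.1
  have hPP : IsIdempotentElem P := by rw [IsIdempotentElem, ← mul_assoc, hNp.1]
  have hPR : P * R = R := hNp.mul_mul_eq_of_mul_transpose_eq (by rw [hRs.eq, hRsq])
  have hRP : R * P = R := by
    simpa only [transpose_mul, hPs.eq, hRs.eq] using congrArg transpose hPR
  have hX : R * Np * R = P := hNp.sqrt_mul_mul_sqrt hNs hRs hRsq
  have hLLp : L * Lp = P := (hNp.mul_eq_mul_of_range_eq hLp hrange).symm
  have hPLp : P * Lp = Lp := by rw [← hLLp, (hLp.commute hLs).eq, hLp.2.1]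
  set T := (1 / 2 : ℝ) • (R * L * R) with hTdef
  have hPT : P * T = T := by rw [hTdef, Matrix.mul_smul, ← mul_assoc, ← mul_assoc, hPR]
  have hnorm : ‖P - T‖ < 1 := by
    refine (l2_opNorm_sub_half_smul_le hPs hPP ?_ ?_ ?_).trans_lt (by norm_num)
    · simp only [IsSymm, transpose_mul, hRs.eq, hLs.eq, mul_assoc]
    · simpa only [hRs.eq, Matrix.mul_smul, Matrix.smul_mul, hX] using hlow.transpose_mul_mul R
    · simpa only [hRs.eq, Matrix.mul_smul, Matrix.smul_mul, hX] using hhigh.transpose_mul_mul R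
  have hG : (1 - (P - T)) * (Np * R * Lp) = (1 / 2 : ℝ) • R := by
    have hPG : P * (Np * R * Lp) = Np * R * Lp := by
      rw [hPdef, (hNp.commute hNs).eq, ← mul_assoc, ← mul_assoc, hNp.2.1]
    have hTG : T * (Np * R * Lp) = (1 / 2 : ℝ) • R := by
      rw [hTdef, Matrix.smul_mul]
      congr 1
      calc R * L * R * (Np * R * Lp) = R * (L * (R * Np * R * Lp)) := by simp only [mul_assoc]
        _ = R := by rw [hX, hPLp, hLLp, hRP]
    rw [sub_sub_eq_add_sub, sub_mul, add_mul, one_mul, hPG, hTG, add_sub_cancel_left]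
  have hRG : R * (Np * R * Lp) = Lp := by rw [← mul_assoc, ← mul_assoc, hX, hPLp]
  have hsum := (hasSum_mul_one_sub_pow_mul R hPP hPT (by rw [Matrix.mul_smul, hPR]) hnorm
    hG).matrix_mulVec x
  simp only [hRG, Matrix.mul_smul, smul_mulVec, ← mulVec_mulVec] at hsum
  exact ⟨hsum.summable, hsum.tsum_eq⟩
end

section
/- Let L be symmetric PSD, N symmetric PSD with (1/2) N⁺ ⪯ L ⪯ 2 N⁺ and Range(N) = Range(L), and let S_z = (1/2) N^{1/2} Σ_{k=0}^{z} (I - (1/2) N^{1/2} L N^{1/2})^k N^{1/2} for an integer z ≥ 4 log(16/√ε) (natural log, ε ∈ (0,1)). Then (1 - √ε/4) L⁺ ⪯ S_z ⪯ L⁺. -/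
open Matrix Finset

/-!
Let `P = N N⁺`, the projection onto `Range N = Range L`, and `M = ½ R L R` with `R = N^{1/2}`.
Conjugating the hypotheses by `R` gives `M ≤ P ≤ 4 M`, so `P` is the support projection of `M`
and the nonzero spectrum of `M` lies in `[1/4, 1]`. Because `0⁻¹ = 0`, the functional calculus
`cfc (·⁻¹) M` is the pseudoinverse of `M` and `cfc (fun x => x * x⁻¹) M` its support projection;
this identifies `L⁺ = ½ R M⁺ R`, while `S_z = ½ R g(M) R` for `g x = ∑_{k ≤ z} (1 - x)^k`.
Both bounds then reduce to `(1 - √ε/4) / x ≤ g x ≤ 1 / x` on `[1/4, 1]`, which holds since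
`(1 - x)^{z+1} ≤ (3/4)^z ≤ √ε/16`.
-/

open scoped MatrixOrder

namespace IsMoorePenroseInv

variable {n : ℕ} {A B C P : Matrix (Fin n) (Fin n) ℝ}

theorem unique (hB : IsMoorePenroseInv A B) (hC : IsMoorePenroseInv A C) : B = C := by
  obtain ⟨hB₁, hB₂, hB₃, hB₄⟩ := hB
  obtain ⟨hC₁, hC₂, hC₃, hC₄⟩ := hC
  have hAB : A * B = A * C := by
    calc A * B = ((A * C) * (A * B))ᵀ := by rw [← Matrix.mul_assoc, hC₁, hB₃]
    _ = A * B * A * C := by rw [transpose_mul, hB₃, hC₃, ← Matrix.mul_assoc]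
    _ = A * C := by rw [hB₁]
  have hBA : B * A = C * A := by
    calc B * A = ((B * A) * (C * A))ᵀ := by
          rw [Matrix.mul_assoc, ← Matrix.mul_assoc A, hC₁, hB₄]
    _ = C * A * B * A := by rw [transpose_mul, hB₄, hC₄, Matrix.mul_assoc (C * A)]
    _ = C * A := by rw [Matrix.mul_assoc C, Matrix.mul_assoc C, hB₁]
  calc B = B * A * B := hB₂.symm
  _ = C * (A * C) := by rw [hBA, Matrix.mul_assoc, hAB]
  _ = C := by rw [← Matrix.mul_assoc, hC₂]

theorem transpose (h : IsMoorePenroseInv A B) : IsMoorePenroseInv Aᵀ Bᵀ := by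
  obtain ⟨h₁, h₂, h₃, h₄⟩ := h
  refine ⟨?_, ?_, by rw [← transpose_mul, h₄, h₄], by rw [← transpose_mul, h₃, h₃]⟩
  · simpa only [transpose_mul, Matrix.mul_assoc] using congrArg Matrix.transpose h₁
  · simpa only [transpose_mul, Matrix.mul_assoc] using congrArg Matrix.transpose h₂

theorem isSymm (hA : A.IsSymm) (h : IsMoorePenroseInv A B) : B.IsSymm :=
  (hA.eq ▸ h.transpose).unique h

theorem mul_comm (hA : A.IsSymm) (h : IsMoorePenroseInv A B) : A * B = B * A := by
  rw [← h.2.2.1, transpose_mul, hA.eq, (h.isSymm hA).eq]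

theorem of_mul_eq (hA : A.IsSymm) (hB : B.IsSymm) (hP : P.IsSymm) (hAB : A * B = P)
    (hPA : P * A = A) (hPB : P * B = B) : IsMoorePenroseInv A B := by
  have hBA : B * A = P := by rw [← hA.eq, ← hB.eq, ← transpose_mul, hAB, hP.eq]
  exact ⟨by rw [hAB, hPA], by rw [hBA, hPB], by rw [hAB, hP.eq], by rw [hBA, hP.eq]⟩

end IsMoorePenroseInv

section Loewner

variable {n : ℕ} {A B : Matrix (Fin n) (Fin n) ℝ}

theorem loewnerLE_of_le (h : A ≤ B) : LoewnerLE A B := fun x => by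
  simpa [sub_mulVec] using h.dotProduct_mulVec_nonneg x

theorem LoewnerLE.le (hA : A.IsHermitian) (hB : B.IsHermitian) (h : LoewnerLE A B) : A ≤ B :=
  .of_dotProduct_mulVec_nonneg (hB.sub hA) fun x => by simpa [sub_mulVec] using h x

end Loewner

theorem Matrix.IsSymm.mul_self {ι α : Type*} [Fintype ι] [NonUnitalCommSemiring α]
    {R : Matrix ι ι α} (hR : R.IsSymm) : (R * R).IsSymm := by
  simpa only [hR.eq] using isSymm_transpose_mul_self R

section SquareRoot

variable {n : ℕ} {R L K Np : Matrix (Fin n) (Fin n) ℝ}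

namespace IsMoorePenroseInv

theorem sqrt_mul_proj (hR : R.IsSymm) (hNp : IsMoorePenroseInv (R * R) Np) :
    R * (R * R * Np) = R := by
  have hN : Rᴴ * R * (1 - R * R * Np) = 0 := by
    rw [conjTranspose_eq_transpose_of_trivial, hR.eq, mul_sub, mul_one, hNp.mul_comm hR.mul_self,
      ← mul_assoc, hNp.1, sub_self]
  rw [conjTranspose_mul_self_mul_eq_zero, mul_sub, mul_one, sub_eq_zero] at hN
  exact hN.symm

theorem proj_mul_sqrt (hR : R.IsSymm) (hNp : IsMoorePenroseInv (R * R) Np) :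
    R * R * Np * R = R := by
  simpa only [transpose_mul, hR.eq, hNp.2.2.1] using
    congrArg Matrix.transpose (hNp.sqrt_mul_proj hR)

theorem sqrt_mul_mul_sqrt_s17 (hR : R.IsSymm) (hNp : IsMoorePenroseInv (R * R) Np) :
    R * Np * R = R * R * Np := by
  calc R * Np * R = R * Np * (R * (R * R * Np)) := by rw [hNp.sqrt_mul_proj hR]
    _ = R * (Np * (R * R)) * R * Np := by simp only [Matrix.mul_assoc]
    _ = R * R * Np := by rw [← hNp.mul_comm hR.mul_self, hNp.sqrt_mul_proj hR]

theorem of_half_conj (hR : R.IsSymm) (hNp : IsMoorePenroseInv (R * R) Np) (hL : L.IsSymm)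
    (hK : K.IsSymm) (hPL : R * R * Np * L = L)
    (hLK : (1 / 2 : ℝ) • (R * L * R) * K = R * R * Np) :
    IsMoorePenroseInv L ((1 / 2 : ℝ) • (R * K * R)) := by
  have hRLX : R * (L * ((1 / 2 : ℝ) • (R * K * R))) = R := by
    calc R * (L * ((1 / 2 : ℝ) • (R * K * R))) = (1 / 2 : ℝ) • (R * L * R) * K * R := by
          simp only [Matrix.mul_smul, Matrix.smul_mul, Matrix.mul_assoc]
      _ = R := by rw [hLK, hNp.proj_mul_sqrt hR]
  refine of_mul_eq hL ?_ hNp.2.2.1 ?_ hPL ?_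
  · simp only [IsSymm, transpose_smul, transpose_mul, hR.eq, hK.eq, Matrix.mul_assoc]
  · calc L * ((1 / 2 : ℝ) • (R * K * R))
          = Np * (R * (R * (L * ((1 / 2 : ℝ) • (R * K * R))))) := by
            conv_lhs => rw [← hPL, hNp.mul_comm hR.mul_self]
            simp only [Matrix.mul_assoc]
      _ = R * R * Np := by rw [hRLX, hNp.mul_comm hR.mul_self]
  · rw [Matrix.mul_smul, ← Matrix.mul_assoc, ← Matrix.mul_assoc, hNp.proj_mul_sqrt hR]

theorem proj_mul_smul_conj (hR : R.IsSymm) (hNp : IsMoorePenroseInv (R * R) Np)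
    (L : Matrix (Fin n) (Fin n) ℝ) {c : ℝ} :
    R * R * Np * (c • (R * L * R)) = c • (R * L * R) := by
  rw [Matrix.mul_smul, ← Matrix.mul_assoc, ← Matrix.mul_assoc, hNp.proj_mul_sqrt hR]

theorem smul_conj_le_proj (hR : R.IsSymm) (hNp : IsMoorePenroseInv (R * R) Np)
    (hL : L.IsHermitian) (h : LoewnerLE L ((2 : ℝ) • Np)) :
    (1 / 2 : ℝ) • (R * L * R) ≤ R * R * Np := by
  have hNp' := isHermitian_iff_isSymm.mpr ((hNp.isSymm hR.mul_self).smul (2 : ℝ))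
  have hR' : IsSelfAdjoint R := isHermitian_iff_isSymm.mpr hR
  calc (1 / 2 : ℝ) • (R * L * R) ≤ (1 / 2 : ℝ) • (R * ((2 : ℝ) • Np) * R) :=
        smul_le_smul_of_nonneg_left (hR'.conjugate_le_conjugate (LoewnerLE.le hL hNp' h))
          (by norm_num)
    _ = R * R * Np := by
        rw [Matrix.mul_smul, Matrix.smul_mul, smul_smul, hNp.sqrt_mul_mul_sqrt_s17 hR]; norm_num

theorem proj_le_smul_conj (hR : R.IsSymm) (hNp : IsMoorePenroseInv (R * R) Np)
    (hL : L.IsHermitian) (h : LoewnerLE ((1 / 2 : ℝ) • Np) L) :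
    R * R * Np ≤ (4 : ℝ) • ((1 / 2 : ℝ) • (R * L * R)) := by
  have hNp' := isHermitian_iff_isSymm.mpr ((hNp.isSymm hR.mul_self).smul (1 / 2 : ℝ))
  have hR' : IsSelfAdjoint R := isHermitian_iff_isSymm.mpr hR
  calc R * R * Np = (2 : ℝ) • (R * ((1 / 2 : ℝ) • Np) * R) := by
        rw [Matrix.mul_smul, Matrix.smul_mul, smul_smul, hNp.sqrt_mul_mul_sqrt_s17 hR]; norm_num
    _ ≤ (2 : ℝ) • (R * L * R) :=
        smul_le_smul_of_nonneg_left (hR'.conjugate_le_conjugate (LoewnerLE.le hNp' hL h))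
          (by norm_num)
    _ = (4 : ℝ) • ((1 / 2 : ℝ) • (R * L * R)) := by rw [smul_smul]; norm_num

end IsMoorePenroseInv

end SquareRoot

theorem Matrix.mul_eq_self_of_range_subset {ι α : Type*} [Fintype ι] [CommSemiring α]
    {P N L : Matrix ι ι α} (hPN : P * N = N) (h : Set.range L.mulVec ⊆ Set.range N.mulVec) :
    P * L = L := by
  refine ext_iff_mulVec.2 fun x => ?_
  obtain ⟨y, hy⟩ := h ⟨x, rfl⟩
  rw [← mulVec_mulVec, ← hy, mulVec_mulVec, hPN]

section Spectral

variable {ι : Type*} [Fintype ι] [DecidableEq ι] {M P : Matrix ι ι ℝ}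

theorem continuousOn_spectrum (f : ℝ → ℝ) (M : Matrix ι ι ℝ) : ContinuousOn f (spectrum ℝ M) :=
  finite_real_spectrum.continuousOn f

theorem mul_cfc_inv (hM : IsSelfAdjoint M) :
    M * cfc (fun x : ℝ => x⁻¹) M = cfc (fun x : ℝ => x * x⁻¹) M := by
  rw [cfc_mul _ _ M (continuousOn_spectrum _ M) (continuousOn_spectrum _ M), cfc_id' ℝ M]

theorem sum_pow_one_sub_eq_cfc (hM : IsSelfAdjoint M) (m : ℕ) :
    ∑ k ∈ range m, (1 - M) ^ k = cfc (fun x : ℝ => ∑ k ∈ range m, (1 - x) ^ k) M := by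
  rw [← sum_fn, cfc_sum _ _ _ fun k _ => continuousOn_spectrum _ M]
  refine sum_congr rfl fun k _ => ?_
  rw [cfc_pow .., cfc_sub .., cfc_const_one .., cfc_id' ..]

theorem mul_cfc_mul_inv (hM : IsSelfAdjoint M) : M * cfc (fun x : ℝ => x * x⁻¹) M = M := by
  calc M * cfc (fun x : ℝ => x * x⁻¹) M
        = cfc (fun x : ℝ => x) M * cfc (fun x : ℝ => x * x⁻¹) M := by rw [cfc_id' ℝ M]
    _ = cfc (fun x : ℝ => x * (x * x⁻¹)) M :=
        (cfc_mul _ _ M (continuousOn_spectrum _ M) (continuousOn_spectrum _ M)).symm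
    _ = M := by simp_rw [← mul_assoc, mul_self_mul_inv]; exact cfc_id' ℝ M

theorem eq_of_le_smul_of_mul_eq {Q : Matrix ι ι ℝ} (hP : IsSelfAdjoint P) (hQ : IsSelfAdjoint Q)
    (hPP : P * P = P) (hPQ : P * Q = Q) (hMQ : M * Q = M) {c : ℝ} (hle : P ≤ c • M) : Q = P := by
  have hQ' : IsSelfAdjoint (1 - Q) := .sub (.one _) hQ
  have hEE : (P * (1 - Q))ᴴ * (P * (1 - Q)) = 0 := by
    refine le_antisymm ?_ (posSemidef_conjTranspose_mul_self _).nonneg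
    calc (P * (1 - Q))ᴴ * (P * (1 - Q)) = (1 - Q) * P * (1 - Q) := by
          rw [conjTranspose_mul, ← star_eq_conjTranspose, ← star_eq_conjTranspose, hQ'.star_eq,
            hP.star_eq, mul_assoc, ← mul_assoc P, hPP, mul_assoc]
      _ ≤ (1 - Q) * (c • M) * (1 - Q) := hQ'.conjugate_le_conjugate hle
      _ = 0 := by rw [Matrix.mul_smul, Matrix.smul_mul, mul_assoc, mul_sub, mul_one, hMQ,
          sub_self, mul_zero, smul_zero]
  have hE := conjTranspose_mul_self_eq_zero.mp hEE
  rwa [mul_sub, mul_one, hPQ, sub_eq_zero, eq_comm] at hE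

theorem cfc_mul_inv_eq_of_le_smul (hM : IsSelfAdjoint M) (hP : IsSelfAdjoint P)
    (hPP : P * P = P) (hPM : P * M = M) {c : ℝ} (hle : P ≤ c • M) :
    cfc (fun x : ℝ => x * x⁻¹) M = P :=
  eq_of_le_smul_of_mul_eq hP (cfc_predicate _ _) hPP
    (by rw [← mul_cfc_inv hM, ← mul_assoc, hPM]) (mul_cfc_mul_inv hM) hle

theorem mem_spectrum_bounds_of_le_of_le_smul (hM : IsSelfAdjoint M) {c : ℝ}
    (h₁ : M ≤ cfc (fun x : ℝ => x * x⁻¹) M) (h₂ : cfc (fun x : ℝ => x * x⁻¹) M ≤ c • M) :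
    ∀ x ∈ spectrum ℝ M, x ≠ 0 → 1 ≤ c * x ∧ x ≤ 1 := by
  rw [← cfc_const_mul_id c M] at h₂
  conv at h₁ => lhs; rw [← cfc_id' ℝ M]
  rw [cfc_le_iff _ _ M (continuousOn_spectrum _ M) (continuousOn_spectrum _ M)] at h₁ h₂
  intro x hx hx0
  have h₁ := h₁ x hx
  have h₂ := h₂ x hx
  rw [mul_inv_cancel₀ hx0] at h₁ h₂
  exact ⟨h₂, h₁⟩

theorem smul_conj_cfc_le {R : Matrix ι ι ℝ} (hR : IsSelfAdjoint R) {c : ℝ} (hc : 0 ≤ c)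
    {f g : ℝ → ℝ} (h : ∀ x ∈ spectrum ℝ M, f x ≤ g x) :
    c • (R * cfc f M * R) ≤ c • (R * cfc g M * R) :=
  smul_le_smul_of_nonneg_left (hR.conjugate_le_conjugate
    (cfc_mono h (continuousOn_spectrum f M) (continuousOn_spectrum g M))) hc

theorem smul_smul_conj_cfc_inv_le {R : Matrix ι ι ℝ} (hR : IsSelfAdjoint R) {c d : ℝ}
    (hc : 0 ≤ c) {f : ℝ → ℝ} (h₀ : 0 ≤ f 0) (h : ∀ x ∈ spectrum ℝ M, x ≠ 0 → d * x⁻¹ ≤ f x) :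
    d • (c • (R * cfc (fun x : ℝ => x⁻¹) M * R)) ≤ c • (R * cfc f M * R) := by
  have hscale : d • (c • (R * cfc (fun x : ℝ => x⁻¹) M * R)) =
      c • (R * cfc (fun x : ℝ => d * x⁻¹) M * R) := by
    rw [cfc_const_mul _ _ M (continuousOn_spectrum _ M), smul_comm, Matrix.mul_smul,
      Matrix.smul_mul]
  rw [hscale]
  refine smul_conj_cfc_le hR hc fun x hx => ?_
  obtain rfl | hx0 := eq_or_ne x 0
  · simpa using h₀
  · exact h x hx hx0

theorem smul_conj_cfc_le_inv {R : Matrix ι ι ℝ} (hR : IsSelfAdjoint R) {c : ℝ} (hc : 0 ≤ c)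
    (hRM : R * cfc (fun x : ℝ => x * x⁻¹) M = R) {f : ℝ → ℝ}
    (h : ∀ x ∈ spectrum ℝ M, x ≠ 0 → f x ≤ x⁻¹) :
    c • (R * cfc f M * R) ≤ c • (R * cfc (fun x : ℝ => x⁻¹) M * R) := by
  have hproj : R * cfc f M = R * cfc (fun x : ℝ => x * x⁻¹ * f x) M := by
    rw [cfc_mul _ _ M (continuousOn_spectrum _ M) (continuousOn_spectrum _ M),
      ← Matrix.mul_assoc, hRM]
  rw [hproj]
  refine smul_conj_cfc_le hR hc fun x hx => ?_
  obtain rfl | hx0 := eq_or_ne x 0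
  · simp
  · rw [mul_inv_cancel₀ hx0, one_mul]
    exact h x hx hx0

end Spectral

section Scalar

open Real

theorem geom_sum_one_sub {a : ℝ} (ha : a ≠ 0) (m : ℕ) :
    ∑ k ∈ range m, (1 - a) ^ k = (1 - (1 - a) ^ m) / a := by
  rw [geom_sum_eq (by simpa using ha), sub_sub_cancel_left, div_neg, ← neg_div, neg_sub]

theorem geom_sum_one_sub_le_inv {a : ℝ} (h0 : 0 < a) (h1 : a ≤ 1) (m : ℕ) :
    ∑ k ∈ range m, (1 - a) ^ k ≤ a⁻¹ := by
  rw [geom_sum_one_sub h0.ne', div_eq_mul_inv]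
  exact mul_le_of_le_one_left (inv_nonneg.2 h0.le) (by linarith [pow_nonneg (sub_nonneg.2 h1) m])

theorem one_sub_mul_inv_le_geom_sum {a d : ℝ} (h0 : 0 < a) {m : ℕ} (hd : (1 - a) ^ m ≤ d) :
    (1 - d) * a⁻¹ ≤ ∑ k ∈ range m, (1 - a) ^ k := by
  rw [geom_sum_one_sub h0.ne', div_eq_mul_inv]
  gcongr

theorem three_quarters_pow_le_inv {t : ℝ} (ht : 0 < t) {z : ℕ} (hz : 4 * log t ≤ z) :
    (3 / 4 : ℝ) ^ z ≤ t⁻¹ := by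
  calc (3 / 4 : ℝ) ^ z ≤ exp (-(1 / 4)) ^ z := by
        gcongr
        linarith [add_one_le_exp (-(1 / 4 : ℝ))]
    _ = exp (-(z / 4)) := by rw [← exp_nat_mul]; ring_nf
    _ ≤ exp (-log t) := by gcongr; linarith
    _ = t⁻¹ := by rw [exp_neg, exp_log ht]

theorem geom_sum_one_sub_bounds {ε x : ℝ} (hε : 0 < ε) (hx₁ : 1 ≤ 4 * x) (hx₂ : x ≤ 1) {z : ℕ}
    (hz : 4 * log (16 / √ε) ≤ z) :
    (1 - √ε / 4) * x⁻¹ ≤ ∑ k ∈ range (z + 1), (1 - x) ^ k ∧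
      ∑ k ∈ range (z + 1), (1 - x) ^ k ≤ x⁻¹ := by
  refine ⟨one_sub_mul_inv_le_geom_sum (by linarith) ?_,
    geom_sum_one_sub_le_inv (by linarith) hx₂ _⟩
  calc (1 - x) ^ (z + 1) ≤ (3 / 4) ^ (z + 1) := pow_le_pow_left₀ (by linarith) (by linarith) _
    _ ≤ (3 / 4) ^ z := pow_le_pow_of_le_one (by norm_num) (by norm_num) (by omega)
    _ ≤ (16 / √ε)⁻¹ := three_quarters_pow_le_inv (by positivity) hz
    _ ≤ √ε / 4 := by rw [inv_div]; linarith [sqrt_nonneg ε]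

end Scalar

theorem stmt_17_general {n : ℕ} (L N Np Lp R : Matrix (Fin n) (Fin n) ℝ)
    (hL : L.PosSemidef)
    (hNp : IsMoorePenroseInv N Np) (hLp : IsMoorePenroseInv L Lp)
    (hlow : LoewnerLE ((1 / 2 : ℝ) • Np) L) (hhigh : LoewnerLE L ((2 : ℝ) • Np))
    (hrange : Set.range N.mulVec = Set.range L.mulVec)
    (hR : R.PosSemidef) (hRsq : R * R = N)   -- R = N^{1/2}
    (ε : ℝ) (hε0 : 0 < ε)
    (z : ℕ) (hz : 4 * Real.log (16 / Real.sqrt ε) ≤ (z : ℝ))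
    (Sz : Matrix (Fin n) (Fin n) ℝ)
    (hSz : Sz = (1 / 2 : ℝ) •
      (R * (∑ k ∈ range (z + 1), (1 - (1 / 2 : ℝ) • (R * L * R)) ^ k) * R)) :
    LoewnerLE ((1 - Real.sqrt ε / 4) • Lp) Sz ∧ LoewnerLE Sz Lp := by
  subst hRsq
  set M := (1 / 2 : ℝ) • (R * L * R) with hMdef
  have hRs : R.IsSymm := isHermitian_iff_isSymm.mp hR.1
  have hLs : L.IsSymm := isHermitian_iff_isSymm.mp hL.1
  have hM : IsSelfAdjoint M := isHermitian_iff_isSymm.mpr <| by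
    simp only [hMdef, IsSymm, transpose_smul, transpose_mul, hRs.eq, hLs.eq, Matrix.mul_assoc]
  have hQ : cfc (fun x : ℝ => x * x⁻¹) M = R * R * Np :=
    cfc_mul_inv_eq_of_le_smul hM (isHermitian_iff_isSymm.mpr hNp.2.2.1)
      (by rw [← Matrix.mul_assoc, hNp.1]) (hNp.proj_mul_smul_conj hRs L)
      (hNp.proj_le_smul_conj hRs hL.1 hlow)
  have hspec := mem_spectrum_bounds_of_le_of_le_smul hM (hQ ▸ hNp.smul_conj_le_proj hRs hL.1 hhigh)
    (hQ ▸ hNp.proj_le_smul_conj hRs hL.1 hlow)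
  have hbounds := fun x hx hx0 =>
    geom_sum_one_sub_bounds hε0 (hspec x hx hx0).1 (hspec x hx hx0).2 hz
  obtain rfl : Lp = (1 / 2 : ℝ) • (R * cfc (fun x : ℝ => x⁻¹) M * R) :=
    hLp.unique (hNp.of_half_conj hRs hLs (isHermitian_iff_isSymm.mp (cfc_predicate _ _))
      (mul_eq_self_of_range_subset hNp.1 hrange.symm.subset) (by rw [mul_cfc_inv hM, hQ]))
  rw [sum_pow_one_sub_eq_cfc hM] at hSz
  subst hSz
  exact ⟨loewnerLE_of_le (smul_smul_conj_cfc_inv_le hR.1.isSelfAdjoint (by norm_num)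
      (sum_nonneg fun k _ => by norm_num) fun x hx hx0 => (hbounds x hx hx0).1),
    loewnerLE_of_le (smul_conj_cfc_le_inv hR.1.isSelfAdjoint (by norm_num)
      (by rw [hQ, hNp.sqrt_mul_proj hRs]) fun x hx hx0 => (hbounds x hx hx0).2)⟩

theorem stmt_17 {n : ℕ} (L N Np Lp R : Matrix (Fin n) (Fin n) ℝ)
    (hL : L.PosSemidef) (hN : N.PosSemidef)
    (hNp : IsMoorePenroseInv N Np) (hLp : IsMoorePenroseInv L Lp)
    (hlow : LoewnerLE ((1 / 2 : ℝ) • Np) L) (hhigh : LoewnerLE L ((2 : ℝ) • Np))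
    (hrange : Set.range N.mulVec = Set.range L.mulVec)
    (hR : R.PosSemidef) (hRsq : R * R = N)   -- R = N^{1/2}
    (ε : ℝ) (hε0 : 0 < ε) (hε1 : ε < 1)
    (z : ℕ) (hz : 4 * Real.log (16 / Real.sqrt ε) ≤ (z : ℝ))
    (Sz : Matrix (Fin n) (Fin n) ℝ)
    (hSz : Sz = (1 / 2 : ℝ) •
      (R * (∑ k ∈ range (z + 1), (1 - (1 / 2 : ℝ) • (R * L * R)) ^ k) * R)) :
    LoewnerLE ((1 - Real.sqrt ε / 4) • Lp) Sz ∧ LoewnerLE Sz Lp :=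
  stmt_17_general L N Np Lp R hL hNp hLp hlow hhigh hrange hR hRsq ε hε0 z hz Sz hSz
end
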